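/- Let U, A, B be Banach spaces (A, B reflexive), 𝒰 ⊂ U open, u₀ ∈ 𝒰, F : 𝒰 × A → B with F(u;·) ∈ L(A;B) linear bounded for each u, m : 𝒰 → A and f : 𝒰 → B satisfying F(u, m(u)) = f(u) for all u ∈ 𝒰. Assume u ↦ F(u;·) is differentiable at u₀ into L(A;B), f is differentiable at u₀, and ‖F(u₀; x)‖_B ≥ α‖x‖_A for all x ∈ A and some α > 0. Then m is differentiable at u₀, and m'(u₀; v) is the unique solution of F(u₀; m'(u₀; v)) = f'(u₀; v) - (∂_u F)(u₀; m(u₀); v) for all v ∈ U. -/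

import Mathlib

open Filter Asymptotics Topology ContinuousLinearMap

set_option maxHeartbeats 1600000

theorem stmt_17 {U A B : Type*}
    [NormedAddCommGroup U] [NormedSpace ℝ U] [CompleteSpace U]
    [NormedAddCommGroup A] [NormedSpace ℝ A] [CompleteSpace A]
    [NormedAddCommGroup B] [NormedSpace ℝ B] [CompleteSpace B]
    (hArefl : Function.Surjective (NormedSpace.inclusionInDoubleDual ℝ A))
    (hBrefl : Function.Surjective (NormedSpace.inclusionInDoubleDual ℝ B))
    (𝒰 : Set U) (h𝒰 : IsOpen 𝒰) (u₀ : U) (hu₀ : u₀ ∈ 𝒰)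
    (F : U → (A →L[ℝ] B)) (m : U → A) (f : U → B)
    (heq : ∀ u ∈ 𝒰, F u (m u) = f u)
    (hF : DifferentiableAt ℝ F u₀) (hf : DifferentiableAt ℝ f u₀)
    (α : ℝ) (hα : 0 < α) (hbound : ∀ x : A, α * ‖x‖ ≤ ‖F u₀ x‖) :
    DifferentiableAt ℝ m u₀ ∧
    ∀ v : U,
      F u₀ (fderiv ℝ m u₀ v) = fderiv ℝ f u₀ v - (fderiv ℝ F u₀ v) (m u₀) ∧
      ∀ w : A, F u₀ w = fderiv ℝ f u₀ v - (fderiv ℝ F u₀ v) (m u₀) →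
        w = fderiv ℝ m u₀ v := by
  classical
  set L := fderiv ℝ F u₀ with hLdef
  set Df := fderiv ℝ f u₀ with hDfdef
  -- injectivity of F u₀
  have hinj : ∀ x : A, F u₀ x = 0 → x = 0 := by
    intro x hx
    have h1 := hbound x
    rw [hx, norm_zero] at h1
    have : ‖x‖ ≤ 0 := by nlinarith [norm_nonneg x]
    simpa using le_antisymm this (norm_nonneg x)
  -- F and f tend to their values
  have hFz : Tendsto (fun u => F u - F u₀) (𝓝 u₀) (𝓝 0) := by
    have := hF.continuousAt.tendsto.sub
      (tendsto_const_nhds : Tendsto (fun _ : U => F u₀) (𝓝 u₀) (𝓝 (F u₀)))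
    simpa using this
  have hfz : Tendsto (fun u => f u - f u₀) (𝓝 u₀) (𝓝 0) := by
    have := hf.continuousAt.tendsto.sub
      (tendsto_const_nhds : Tendsto (fun _ : U => f u₀) (𝓝 u₀) (𝓝 (f u₀)))
    simpa using this
  have hEF : ∀ᶠ u in 𝓝 u₀, ‖F u - F u₀‖ ≤ α / 2 := by
    have := hFz.norm
    simp only [norm_zero] at this
    exact (this.eventually_lt_const (half_pos hα)).mono fun u hu => hu.le
  have hEf : ∀ᶠ u in 𝓝 u₀, ‖f u - f u₀‖ ≤ 1 := by
    have := hfz.norm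
    simp only [norm_zero] at this
    exact (this.eventually_lt_const one_pos).mono fun u hu => hu.le
  have hU : ∀ᶠ u in 𝓝 u₀, u ∈ 𝒰 := h𝒰.mem_nhds hu₀
  -- pointwise identity
  have key : ∀ u ∈ 𝒰, F u₀ (m u) = f u - (F u - F u₀) (m u) := by
    intro u hu
    rw [ContinuousLinearMap.sub_apply, heq u hu]
    abel
  -- local bound on ‖m u‖
  set M : ℝ := 2 * (‖f u₀‖ + 1) / α with hMdef
  have hM0 : 0 ≤ M := by positivity
  have hbm : ∀ᶠ u in 𝓝 u₀, ‖m u‖ ≤ M := by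
    filter_upwards [hU, hEF, hEf] with u hu h1 h2
    have e1 := key u hu
    have e2 : ‖F u₀ (m u)‖ ≤ ‖f u‖ + (α / 2) * ‖m u‖ := by
      rw [e1]
      refine (norm_sub_le _ _).trans (add_le_add le_rfl ?_)
      exact ((F u - F u₀).le_opNorm (m u)).trans
        (mul_le_mul_of_nonneg_right h1 (norm_nonneg _))
    have e3 : ‖f u‖ ≤ ‖f u₀‖ + 1 := by
      have := norm_sub_norm_le (f u) (f u₀)
      linarith
    have e4 := hbound (m u)
    show ‖m u‖ ≤ 2 * (‖f u₀‖ + 1) / α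
    rw [le_div_iff₀ hα]
    linarith
  -- m u - m u₀ → 0
  have hmz : Tendsto (fun u => m u - m u₀) (𝓝 u₀) (𝓝 0) := by
    have hb : ∀ᶠ u in 𝓝 u₀, ‖m u - m u₀‖ ≤
        α⁻¹ * (‖f u - f u₀‖ + ‖F u - F u₀‖ * M) := by
      filter_upwards [hU, hbm] with u hu hmu
      have e1 : F u₀ (m u - m u₀) = (f u - f u₀) - (F u - F u₀) (m u) := by
        rw [map_sub, key u hu, key u₀ hu₀]
        simp only [sub_self, ContinuousLinearMap.zero_apply, sub_zero]
        abel
      have e2 : ‖F u₀ (m u - m u₀)‖ ≤ ‖f u - f u₀‖ + ‖F u - F u₀‖ * M := by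
        rw [e1]
        refine (norm_sub_le _ _).trans (add_le_add le_rfl ?_)
        exact ((F u - F u₀).le_opNorm (m u)).trans
          (mul_le_mul_of_nonneg_left hmu (norm_nonneg _))
      have := (hbound (m u - m u₀)).trans e2
      rw [le_inv_mul_iff₀ hα]
      linarith
    have hto : Tendsto (fun u => α⁻¹ * (‖f u - f u₀‖ + ‖F u - F u₀‖ * M)) (𝓝 u₀)
        (𝓝 (α⁻¹ * (0 + 0 * M))) := by
      have h2 := hfz.norm
      have h3 := hFz.norm
      simp only [norm_zero] at h2 h3
      exact tendsto_const_nhds.mul (h2.add (h3.mul tendsto_const_nhds))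
    simp only [zero_mul, add_zero, mul_zero] at hto
    exact squeeze_zero_norm' hb hto
  have hmo : (fun u => m u - m u₀) =o[𝓝 u₀] (fun _ => (1 : ℝ)) :=
    (isLittleO_one_iff ℝ).mpr hmz
  -- auxiliary function h and its derivative
  set h : U → B := fun u => f u - (F u - F u₀) (m u) with hhdef
  set D : U →L[ℝ] B := Df - L.flip (m u₀) with hDdef
  have hh0 : h u₀ = f u₀ := by simp [hhdef]
  have hFo : (fun u => F u - F u₀) =O[𝓝 u₀] fun u => u - u₀ :=
    hF.hasFDerivAt.isBigO_sub
  have hFr : (fun u => F u - F u₀ - L (u - u₀)) =o[𝓝 u₀] fun u => u - u₀ :=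
    hF.hasFDerivAt.isLittleO
  have hfr : (fun u => f u - f u₀ - Df (u - u₀)) =o[𝓝 u₀] fun u => u - u₀ :=
    hf.hasFDerivAt.isLittleO
  have t1 : (fun u => (F u - F u₀) (m u - m u₀)) =o[𝓝 u₀] fun u => u - u₀ := by
    have hb : (fun u => (F u - F u₀) (m u - m u₀)) =O[𝓝 u₀]
        fun u => ‖F u - F u₀‖ * ‖m u - m u₀‖ := by
      apply isBigO_of_le
      intro u
      simpa using (F u - F u₀).le_opNorm (m u - m u₀)
    refine hb.trans_isLittleO ?_
    have h2 : (fun u => ‖F u - F u₀‖ * ‖m u - m u₀‖) =o[𝓝 u₀]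
        fun u => ‖u - u₀‖ := by
      simpa using hFo.norm_norm.mul_isLittleO hmo.norm_left
    exact h2.of_norm_right
  have t2 : (fun u => (F u - F u₀ - L (u - u₀)) (m u₀)) =o[𝓝 u₀]
      fun u => u - u₀ := by
    have hb : (fun u => (F u - F u₀ - L (u - u₀)) (m u₀)) =O[𝓝 u₀]
        fun u => F u - F u₀ - L (u - u₀) := by
      apply isBigO_of_le' (c := ‖m u₀‖)
      intro u
      rw [mul_comm]
      exact (F u - F u₀ - L (u - u₀)).le_opNorm (m u₀)
    exact hb.trans_isLittleO hFr
  have hhd : HasFDerivAt h D u₀ := by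
    rw [hasFDerivAt_iff_isLittleO]
    have heqn : (fun u => h u - h u₀ - D (u - u₀)) =
        fun u => (f u - f u₀ - Df (u - u₀)) - (F u - F u₀) (m u - m u₀)
          - (F u - F u₀ - L (u - u₀)) (m u₀) := by
      funext u
      simp only [hhdef, hDdef, ContinuousLinearMap.sub_apply,
        ContinuousLinearMap.flip_apply, map_sub, sub_self,
        ContinuousLinearMap.zero_apply]
      abel
    rw [heqn]
    exact (hfr.sub t1).sub t2
  -- the range of F u₀ is a closed complemented-free submodule
  set R : Submodule ℝ B := LinearMap.range (F u₀ : A →ₗ[ℝ] B) with hRdef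
  have hanti : AntilipschitzWith (⟨α, hα.le⟩ : NNReal)⁻¹ (F u₀) := by
    apply ContinuousLinearMap.antilipschitz_of_bound
    intro x
    have := hbound x
    show ‖x‖ ≤ α⁻¹ * ‖F u₀ x‖
    rw [le_inv_mul_iff₀ hα]
    exact this
  have hclR : IsClosed (R : Set B) := by
    have := hanti.isClosed_range (F u₀).uniformContinuous
    rw [hRdef, LinearMap.coe_range, ContinuousLinearMap.coe_coe]
    exact this
  haveI : CompleteSpace R := hclR.completeSpace_coe
  set T : A →L[ℝ] R := (F u₀).codRestrict R (fun x => LinearMap.mem_range_self _ x)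
    with hTdef
  have hker : LinearMap.ker (T : A →ₗ[ℝ] R) = ⊥ := by
    change LinearMap.ker ((F u₀ : A →ₗ[ℝ] B).codRestrict R (fun x => LinearMap.mem_range_self _ x)) = ⊥
    rw [LinearMap.ker_codRestrict]
    rw [Submodule.eq_bot_iff]
    intro x hx
    exact hinj x (LinearMap.mem_ker.mp hx)
  have hrange : LinearMap.range (T : A →ₗ[ℝ] R) = ⊤ := by
    rw [hTdef, LinearMap.range_eq_top]
    rintro ⟨y, hy⟩
    obtain ⟨x, hx⟩ := hy
    exact ⟨x, Subtype.ext hx⟩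
  set e : A ≃L[ℝ] R := ContinuousLinearEquiv.ofBijective T hker hrange with hedef
  have hecoe : ∀ x : A, e x = T x := fun x =>
    congrFun (ContinuousLinearEquiv.coeFn_ofBijective T hker hrange) x
  -- h maps 𝒰 into R
  have hhR : ∀ u ∈ 𝒰, h u ∈ R := by
    intro u hu
    rw [show h u = F u₀ (m u) from (key u hu).symm]
    exact LinearMap.mem_range_self _ _
  -- D maps into R
  have hDR : ∀ v : U, D v ∈ R := by
    intro v
    have hc : Tendsto (fun n : ℕ => ‖((n : ℝ) + 1)‖) atTop atTop := by
      have h1 : Tendsto (fun n : ℕ => (n : ℝ) + 1) atTop atTop :=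
        tendsto_atTop_add_const_right _ 1 tendsto_natCast_atTop_atTop
      refine h1.congr fun n => ?_
      rw [Real.norm_eq_abs, abs_of_nonneg (by positivity)]
    have hlim := hhd.lim v hc
    have hmem : Tendsto (fun n : ℕ => u₀ + ((n : ℝ) + 1)⁻¹ • v) atTop (𝓝 u₀) := by
      have h2 : Tendsto (fun n : ℕ => ((n : ℝ) + 1)⁻¹) atTop (𝓝 0) := by
        apply Tendsto.inv_tendsto_atTop
        exact tendsto_atTop_add_const_right _ 1 tendsto_natCast_atTop_atTop
      have := (h2.smul_const v).const_add u₀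
      simpa using this
    have hev : ∀ᶠ n : ℕ in atTop,
        (((n : ℝ) + 1) • (h (u₀ + ((n : ℝ) + 1)⁻¹ • v) - h u₀)) ∈ (R : Set B) := by
      filter_upwards [hmem.eventually hU] with n hn
      exact R.smul_mem _ (R.sub_mem (hhR _ hn) (hhR u₀ hu₀))
    exact hclR.mem_of_tendsto hlim hev
  set D' : U →L[ℝ] R := D.codRestrict R hDR with hD'def
  -- the function g with values in R
  set g : U → R := fun u => if hu : u ∈ 𝒰 then ⟨h u, hhR u hu⟩ else 0 with hgdef
  have hgd : HasFDerivAt g D' u₀ := by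
    rw [hasFDerivAt_iff_isLittleO]
    rw [hasFDerivAt_iff_isLittleO, isLittleO_iff] at hhd
    rw [isLittleO_iff]
    intro c hc
    filter_upwards [hhd hc, hU] with u h1 h2
    have hv : ((g u - g u₀ - D' (u - u₀) : R) : B) = h u - h u₀ - D (u - u₀) := by
      simp [hgdef, dif_pos h2, dif_pos hu₀, hD'def]
    have hn : ‖g u - g u₀ - D' (u - u₀)‖ = ‖h u - h u₀ - D (u - u₀)‖ := by
      rw [← hv]; rfl
    rw [hn]
    exact h1
  -- m agrees with e.symm ∘ g near u₀
  have hmg : m =ᶠ[𝓝 u₀] fun u => e.symm (g u) := by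
    filter_upwards [hU] with u hu
    have hgm : e (m u) = g u := by
      apply Subtype.ext
      rw [hecoe]
      simp only [hgdef, dif_pos hu]
      exact key u hu
    rw [← hgm, ContinuousLinearEquiv.symm_apply_apply]
  have hmd : HasFDerivAt m ((e.symm : R →L[ℝ] A).comp D') u₀ := by
    have h1 : HasFDerivAt (fun u => e.symm (g u))
        ((e.symm : R →L[ℝ] A).comp D') u₀ :=
      ((e.symm : R →L[ℝ] A).hasFDerivAt).comp u₀ hgd
    exact h1.congr_of_eventuallyEq hmg
  have hdm : fderiv ℝ m u₀ = (e.symm : R →L[ℝ] A).comp D' := hmd.fderiv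
  refine ⟨hmd.differentiableAt, fun v => ?_⟩
  have hval : F u₀ (fderiv ℝ m u₀ v) = D v := by
    rw [hdm]
    show F u₀ (e.symm (D' v)) = D v
    have h1 : F u₀ (e.symm (D' v)) = (T (e.symm (D' v)) : B) := rfl
    rw [h1, ← hecoe, e.apply_symm_apply]
    rfl
  have hDv : D v = Df v - L v (m u₀) := by
    simp [hDdef, ContinuousLinearMap.flip_apply]
  constructor
  · rw [hval, hDv]
  · intro w hw
    have hz : F u₀ (w - fderiv ℝ m u₀ v) = 0 := by
      rw [map_sub, hw, hval, hDv, sub_self]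
    exact sub_eq_zero.mp (hinj _ hz)
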